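/- The identity operator on the Banach lattice ℓ² of square-summable real sequences is weakly compact but not almost limited. -/

import Mathlib

open Filter Topology Metric Set NormedSpace BoundedContinuousFunction

noncomputable section

/-- The value `|f| x` of the modulus of a functional `f` in the dual of a Banach lattice,
at a positive element `x`, given by the Riesz–Kantorovich formula. -/
def dualAbs {E : Type*} [NormedAddCommGroup E] [Lattice E] [HasSolidNorm E]
    [IsOrderedAddMonoid E] [NormedSpace ℝ E]
    (f : E →L[ℝ] ℝ) (x : E) : ℝ :=
  sSup {r : ℝ | ∃ z : E, |z| ≤ x ∧ r = |f z|}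

/-- Two functionals `f, g` on a Banach lattice are disjoint, i.e. `|f| ⊓ |g| = 0` in the dual
lattice; by the Riesz–Kantorovich formula this means that for every `x ≥ 0` the infimum of
`|f| y + |g| (x - y)` over `0 ≤ y ≤ x` is `0`. -/
def DualDisjoint {E : Type*} [NormedAddCommGroup E] [Lattice E] [HasSolidNorm E]
    [IsOrderedAddMonoid E] [NormedSpace ℝ E]
    (f g : E →L[ℝ] ℝ) : Prop :=
  ∀ x : E, 0 ≤ x → ∀ ε : ℝ, 0 < ε →
    ∃ y : E, 0 ≤ y ∧ y ≤ x ∧ dualAbs f y + dualAbs g (x - y) < ε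

/-- A sequence of functionals is weak* null if it converges to `0` pointwise. -/
def WeakStarNull {E : Type*} [NormedAddCommGroup E] [NormedSpace ℝ E]
    (f : ℕ → E →L[ℝ] ℝ) : Prop :=
  ∀ x : E, Tendsto (fun n => f n x) atTop (𝓝 0)

/-- A functional on a Banach lattice is positive if it is nonnegative on the positive cone. -/
def PositiveFunctional {E : Type*} [NormedAddCommGroup E] [Lattice E] [HasSolidNorm E]
    [IsOrderedAddMonoid E] [NormedSpace ℝ E]
    (f : E →L[ℝ] ℝ) : Prop :=
  ∀ x : E, 0 ≤ x → 0 ≤ f x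

/-- An operator between Banach lattices is positive if it maps the positive cone into
the positive cone. -/
def IsPositiveOp {E F : Type*} [NormedAddCommGroup E] [Lattice E] [HasSolidNorm E]
    [IsOrderedAddMonoid E] [NormedSpace ℝ E]
    [NormedAddCommGroup F] [Lattice F] [HasSolidNorm F]
    [IsOrderedAddMonoid F] [NormedSpace ℝ F] (T : E →L[ℝ] F) : Prop :=
  ∀ x : E, 0 ≤ x → 0 ≤ T x

/-- An operator `T : X → E` into a Banach lattice is almost limited if `‖T* fₙ‖ → 0` for
every disjoint weak* null sequence `(fₙ)` in `E*`. -/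
def AlmostLimited {X E : Type*} [NormedAddCommGroup X] [NormedSpace ℝ X]
    [NormedAddCommGroup E] [Lattice E] [HasSolidNorm E]
    [IsOrderedAddMonoid E] [NormedSpace ℝ E] (T : X →L[ℝ] E) : Prop :=
  ∀ f : ℕ → E →L[ℝ] ℝ, WeakStarNull f → Pairwise (fun n m => DualDisjoint (f n) (f m)) →
    Tendsto (fun n => ‖(f n).comp T‖) atTop (𝓝 0)

/-- A Banach lattice `E` has property (d) if `|fₙ| → 0` in the weak* topology for every
disjoint weak* null sequence `(fₙ)` in `E*` (it suffices to test `|fₙ|` on the positive cone). -/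
def PropertyD (E : Type*) [NormedAddCommGroup E] [Lattice E] [HasSolidNorm E]
    [IsOrderedAddMonoid E] [NormedSpace ℝ E] : Prop :=
  ∀ f : ℕ → E →L[ℝ] ℝ, WeakStarNull f → Pairwise (fun n m => DualDisjoint (f n) (f m)) →
    ∀ x : E, 0 ≤ x → Tendsto (fun n => dualAbs (f n) x) atTop (𝓝 0)

/-- A Banach lattice `E` has the dual positive Schur property if every weak* null sequence of
positive functionals is norm null. -/
def DualPositiveSchur (E : Type*) [NormedAddCommGroup E] [Lattice E] [HasSolidNorm E]
    [IsOrderedAddMonoid E] [NormedSpace ℝ E] : Prop :=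
  ∀ f : ℕ → E →L[ℝ] ℝ, WeakStarNull f → (∀ n, PositiveFunctional (f n)) →
    Tendsto (fun n => ‖f n‖) atTop (𝓝 0)

/-- A Banach lattice `F` has the positive Schur property if every weakly null sequence of
positive elements is norm null. -/
def PositiveSchur (F : Type*) [NormedAddCommGroup F] [Lattice F] [HasSolidNorm F]
    [IsOrderedAddMonoid F] [NormedSpace ℝ F] : Prop :=
  ∀ x : ℕ → F, (∀ g : F →L[ℝ] ℝ, Tendsto (fun n => g (x n)) atTop (𝓝 0)) →
    (∀ n, 0 ≤ x n) → Tendsto (fun n => ‖x n‖) atTop (𝓝 0)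

/-- An operator is weakly compact if the image of the closed unit ball is relatively
compact in the weak topology. -/
def IsWeaklyCompactOp {X Y : Type*} [NormedAddCommGroup X] [NormedSpace ℝ X]
    [NormedAddCommGroup Y] [NormedSpace ℝ Y] (T : X →L[ℝ] Y) : Prop :=
  IsCompact (closure (toWeakSpaceCLM ℝ Y '' (T '' closedBall 0 1)))

/-- A lattice is σ-Dedekind complete if every countable nonempty order-bounded subset has a
supremum. -/
def SigmaDedekindComplete (E : Type*) [Lattice E] : Prop :=
  ∀ s : Set E, s.Countable → s.Nonempty → BddAbove s → ∃ a, IsLUB s a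

/-- The norm of a Banach lattice is order continuous if `x_α ↓ 0` implies `‖x_α‖ ↓ 0`,
for every decreasing net `(x_α)` with infimum `0`. -/
def HasOrderContinuousNorm (E : Type*) [NormedAddCommGroup E] [Lattice E] [HasSolidNorm E]
    [IsOrderedAddMonoid E] : Prop :=
  ∀ ⦃ι : Type*⦄ [Preorder ι] [Nonempty ι] [IsDirected ι (· ≤ ·)] (x : ι → E),
    Antitone x → IsGLB (Set.range x) 0 → Tendsto (fun i => ‖x i‖) atTop (𝓝 0)

/-- A Banach space is reflexive if the canonical embedding into its double dual is
surjective. -/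
def ReflexiveSpace (X : Type*) [NormedAddCommGroup X] [NormedSpace ℝ X] : Prop :=
  Function.Surjective (inclusionInDoubleDual ℝ X)

/-- The Banach lattice `ℓ^∞` of bounded real sequences. -/
abbrev LinftySeq : Type := ℕ →ᵇ ℝ

/-- The Banach lattice `ℓ²` of square-summable real sequences, realized as an `L²`-space over
`ℕ` with counting measure. -/
abbrev LtwoSeq : Type :=
  MeasureTheory.Lp (α := ℕ) ℝ 2 (MeasureTheory.Measure.count)

/-!
`ℓ²` is a Hilbert space, hence reflexive, so by Banach–Alaoglu in the bidual every bounded subset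
of `ℓ²` is relatively weakly compact. The coordinate functionals `eₙ*` are orthonormal, hence
weak* null by Bessel's inequality, and they have norm one. They are pairwise disjoint: for
`x ≥ 0` and `n ≠ m`, the split `x = x(m) eₘ + (x - x(m) eₘ)` puts below `x` a positive part
vanishing at `n` and a complement vanishing at `m`, on whose order intervals `eₙ*`, resp. `eₘ*`,
vanish identically.
-/

open MeasureTheory InnerProductSpace

theorem ReflexiveSpace.isWeaklyCompactOp {X Y : Type*} [NormedAddCommGroup X] [NormedSpace ℝ X]
    [NormedAddCommGroup Y] [NormedSpace ℝ Y] (hY : ReflexiveSpace Y) (T : X →L[ℝ] Y) :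
    IsWeaklyCompactOp T := by
  refine isCompact_closure_of_isBounded ℝ Y _ ?_ ?_
  · rw [toWeakSpaceCLM, ContinuousLinearMap.coe_mk', LinearEquiv.coe_toLinearMap,
      (toWeakSpace ℝ Y).injective.preimage_image]
    exact T.lipschitz.isBounded_image isBounded_closedBall
  · rintro φ -
    obtain ⟨y, hy⟩ := hY (StrongDual.toWeakDual.symm φ)
    exact ⟨toWeakSpace ℝ Y y, congrArg StrongDual.toWeakDual hy⟩

theorem reflexiveSpace_of_innerProductSpace (H : Type*) [NormedAddCommGroup H]
    [InnerProductSpace ℝ H] [CompleteSpace H] : ReflexiveSpace H := by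
  intro φ
  refine ⟨(toDual ℝ H).symm (φ.comp (innerSL ℝ)), ContinuousLinearMap.ext fun f => ?_⟩
  rw [dual_def, ← toDual_symm_apply, real_inner_comm, toDual_symm_apply,
    ContinuousLinearMap.comp_apply]
  congr 1
  ext x
  simp

section DualDisjoint

variable {E : Type*} [NormedAddCommGroup E] [Lattice E] [HasSolidNorm E]
    [IsOrderedAddMonoid E] [NormedSpace ℝ E]

theorem dualAbs_eq_zero_of_forall_abs_le {f : E →L[ℝ] ℝ} {y : E} (hy : 0 ≤ y)
    (hf : ∀ z, |z| ≤ y → f z = 0) : dualAbs f y = 0 := by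
  have hset : {r : ℝ | ∃ z : E, |z| ≤ y ∧ r = |f z|} = {0} := by
    ext r
    constructor
    · rintro ⟨z, hz, rfl⟩
      simp [hf z hz]
    · rintro rfl
      exact ⟨0, by rwa [abs_zero], by simp⟩
  rw [dualAbs, hset, csSup_singleton]

theorem dualDisjoint_of_forall_exists_split {f g : E →L[ℝ] ℝ}
    (h : ∀ x : E, 0 ≤ x → ∃ y, 0 ≤ y ∧ y ≤ x ∧
      (∀ z, |z| ≤ y → f z = 0) ∧ (∀ z, |z| ≤ x - y → g z = 0)) :
    DualDisjoint f g := by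
  intro x hx ε hε
  obtain ⟨y, hy, hyx, hfy, hgy⟩ := h x hx
  refine ⟨y, hy, hyx, ?_⟩
  rwa [dualAbs_eq_zero_of_forall_abs_le hy hfy,
    dualAbs_eq_zero_of_forall_abs_le (sub_nonneg.mpr hyx) hgy, add_zero]

end DualDisjoint

theorem Orthonormal.tendsto_inner_atTop_zero {𝕜 E : Type*} [RCLike 𝕜] [NormedAddCommGroup E]
    [InnerProductSpace 𝕜 E] {v : ℕ → E} (hv : Orthonormal 𝕜 v) (x : E) :
    Tendsto (fun n => inner 𝕜 (v n) x) atTop (𝓝 0) := by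
  have hsq := (hv.inner_products_summable (x := x)).tendsto_atTop_zero.sqrt
  simp only [Real.sqrt_zero, Real.sqrt_sq (norm_nonneg _)] at hsq
  exact tendsto_zero_iff_norm_tendsto_zero.mpr hsq

namespace LtwoSeq

theorem le_iff {y z : LtwoSeq} : y ≤ z ↔ ∀ k, y k ≤ z k := by
  rw [← Lp.coeFn_le, Filter.EventuallyLE, Measure.ae_count_iff]

theorem nonneg_iff {z : LtwoSeq} : 0 ≤ z ↔ ∀ k, 0 ≤ z k := by
  rw [← Lp.coeFn_nonneg, Filter.EventuallyLE, Measure.ae_count_iff, Pi.zero_def]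

theorem abs_apply (z : LtwoSeq) (k : ℕ) : |z| k = |z k| :=
  Measure.ae_count_iff.mp (Lp.coeFn_abs z) k

theorem sub_apply (y z : LtwoSeq) (k : ℕ) : (y - z) k = y k - z k :=
  Measure.ae_count_iff.mp (Lp.coeFn_sub y z) k

theorem smul_apply (c : ℝ) (z : LtwoSeq) (k : ℕ) : (c • z) k = c * z k :=
  Measure.ae_count_iff.mp (Lp.coeFn_smul c z) k

def single (n : ℕ) : LtwoSeq :=
  indicatorConstLp 2 (measurableSet_singleton n) (by simp) (1 : ℝ)

theorem single_apply (n k : ℕ) : single n k = if k = n then 1 else 0 := by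
  rw [single, Measure.ae_count_iff.mp indicatorConstLp_coeFn k]
  simp [Set.indicator]

theorem inner_single (n : ℕ) (z : LtwoSeq) : inner ℝ (single n) z = z n := by
  rw [single, L2.inner_indicatorConstLp_eq_inner_setIntegral, Measure.restrict_singleton,
    integral_smul_measure, integral_dirac, Measure.count_singleton]
  simp

theorem orthonormal_single : Orthonormal ℝ single := by
  rw [orthonormal_iff_ite]
  intro i j
  rw [inner_single, single_apply]

def coord (n : ℕ) : LtwoSeq →L[ℝ] ℝ := innerSL ℝ (single n)

theorem coord_apply (n : ℕ) (z : LtwoSeq) : coord n z = z n := inner_single n z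

theorem norm_coord (n : ℕ) : ‖coord n‖ = 1 := by
  rw [coord, innerSL_apply_norm, orthonormal_single.1 n]

theorem weakStarNull_coord : WeakStarNull coord :=
  orthonormal_single.tendsto_inner_atTop_zero

theorem coord_eq_zero_of_abs_le {n : ℕ} {y z : LtwoSeq} (hz : |z| ≤ y) (hy : y n = 0) :
    coord n z = 0 := by
  have hzn := le_iff.mp hz n
  rwa [abs_apply, hy, abs_nonpos_iff, ← coord_apply] at hzn

theorem pairwise_dualDisjoint_coord : Pairwise fun n m => DualDisjoint (coord n) (coord m) := by
  intro n m hnm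
  refine dualDisjoint_of_forall_exists_split fun x hx => ?_
  have hx' := nonneg_iff.mp hx
  refine ⟨x m • single m, ?_, ?_, fun z hz => coord_eq_zero_of_abs_le hz ?_,
    fun z hz => coord_eq_zero_of_abs_le hz ?_⟩
  · refine nonneg_iff.mpr fun k => ?_
    rw [smul_apply, single_apply]
    exact mul_nonneg (hx' m) (by split_ifs <;> norm_num)
  · refine le_iff.mpr fun k => ?_
    rw [smul_apply, single_apply]
    split_ifs with hk
    · rw [hk, mul_one]
    · rw [mul_zero]
      exact hx' k
  · rw [smul_apply, single_apply, if_neg hnm, mul_zero]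
  · rw [sub_apply, smul_apply, single_apply, if_pos rfl, mul_one, sub_self]

end LtwoSeq

/-- The identity operator of `ℓ²` is weakly compact but not almost limited. -/
theorem id_ltwo_weaklyCompact_not_almostLimited :
    IsWeaklyCompactOp (ContinuousLinearMap.id ℝ LtwoSeq) ∧
      ¬ AlmostLimited (ContinuousLinearMap.id ℝ LtwoSeq) := by
  refine ⟨(reflexiveSpace_of_innerProductSpace LtwoSeq).isWeaklyCompactOp _, fun h => ?_⟩
  have hnull := h LtwoSeq.coord LtwoSeq.weakStarNull_coord LtwoSeq.pairwise_dualDisjoint_coord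
  simp only [ContinuousLinearMap.comp_id, LtwoSeq.norm_coord] at hnull
  exact one_ne_zero (tendsto_nhds_unique tendsto_const_nhds hnull)
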